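/- arXiv:0904.1766 — 5 statements merged into one kernel-verified Lean document; each statement's English description precedes it below -/
import Mathlib

section
/- Let g be a product of vectors of q-value 1 in Cl(V,q), so g is invertible. If W ⊆ V is a subspace with basis w₁,…,w_m and g w_i g⁻¹ = ±w'_i with w'_i ∈ V, then the left ideal Cl·(w₁⋯w_m)·g⁻¹ equals the left ideal Cl·(w'₁⋯w'_m). -/
/-!
Since `ι Q u * ι Q u = Q u = 1`, the product `g` of the `ι Q uⱼ` is a unit whose inverse `h` is
the product in reverse order. Conjugation by `g` is multiplicative, so
`g (w₁⋯w_m) h = ±(w'₁⋯w'_m)`; hence `(w₁⋯w_m) h = ±h (w'₁⋯w'_m)` differs from `w'₁⋯w'_m` by a unit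
on the left, and the two elements generate the same left ideal.
-/

open CliffordAlgebra QuadraticMap

theorem List.prod_mul_prod_reverse_eq_one {M : Type*} [Monoid M] (l : List M)
    (hl : ∀ x ∈ l, x * x = 1) : l.prod * l.reverse.prod = 1 := by
  induction l with
  | nil => simp
  | cons a t ih =>
    rw [List.prod_cons, List.reverse_cons, List.prod_append, List.prod_singleton]
    calc a * t.prod * (t.reverse.prod * a) = a * (t.prod * t.reverse.prod) * a := by
          simp only [mul_assoc]
      _ = 1 := by
          rw [ih fun x hx => hl x (List.mem_cons_of_mem a hx), mul_one,
            hl a List.mem_cons_self]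

theorem List.prod_ofFn_smul {R A : Type*} [CommMonoid R] [Monoid A] [MulAction R A]
    [IsScalarTower R A A] [SMulCommClass R A A] {n : ℕ} (c : Fin n → R) (f : Fin n → A) :
    (List.ofFn fun i => c i • f i).prod = (∏ i, c i) • (List.ofFn f).prod := by
  induction n with
  | zero => simp
  | succ n ih =>
    rw [List.ofFn_succ, List.ofFn_succ, List.prod_cons, List.prod_cons,
      ih (fun i => c i.succ) (fun i => f i.succ), Fin.prod_univ_succ, smul_mul_smul_comm]

theorem Units.mul_list_prod_mul_inv {M : Type*} [Monoid M] (u : Mˣ) (l : List M) :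
    ↑u * l.prod * ↑u⁻¹ = (l.map fun x => (u : M) * x * ↑u⁻¹).prod := by
  simpa only [ConjAct.units_smul_def, ConjAct.ofConjAct_toConjAct] using
    List.smul_prod' (r := ConjAct.toConjAct u) (l := l)

theorem CliffordAlgebra.prod_map_ι_mul_prod_reverse_map_ι {R M : Type*} [CommRing R]
    [AddCommGroup M] [Module R M] {Q : QuadraticForm R M} (l : List M)
    (hl : ∀ u ∈ l, Q u = 1) : (l.map (ι Q)).prod * (l.reverse.map (ι Q)).prod = 1 := by
  rw [List.map_reverse]
  refine List.prod_mul_prod_reverse_eq_one _ fun x hx => ?_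
  obtain ⟨u, hu, rfl⟩ := List.mem_map.mp hx
  rw [ι_sq_scalar, hl u hu, map_one]

theorem stmt6_general {k V : Type*} [Field k] [AddCommGroup V] [Module k V]
    (Q : QuadraticForm k V)
    (l : List V) (hl : ∀ u ∈ l, Q u = 1)
    (m : ℕ) (W : Submodule k V) (b : Module.Basis (Fin m) k W)
    (w' : Fin m → V) (ε : Fin m → k) (hε : ∀ i, ε i = 1 ∨ ε i = -1)
    (g h : CliffordAlgebra Q)
    (hg : g = (l.map (ι Q)).prod) (hh : h = (l.reverse.map (ι Q)).prod)
    (hconj : ∀ i, g * ι Q (b i : V) * h = ε i • ι Q (w' i)) :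
    (g * h = 1 ∧ h * g = 1) ∧
      Ideal.span {((List.ofFn fun i => ι Q (b i : V)).prod) * h} =
        Ideal.span {(List.ofFn fun i => ι Q (w' i)).prod} := by
  have hgh : g * h = 1 := hg ▸ hh ▸ prod_map_ι_mul_prod_reverse_map_ι l hl
  have hhg : h * g = 1 := by
    simpa [hg, hh] using prod_map_ι_mul_prod_reverse_map_ι l.reverse (by simpa using hl)
  refine ⟨⟨hgh, hhg⟩, ?_⟩
  let u : (CliffordAlgebra Q)ˣ := ⟨g, h, hgh, hhg⟩
  set P := (List.ofFn fun i => ι Q (b i : V)).prod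
  set P' := (List.ofFn fun i => ι Q (w' i)).prod
  have hε0 : ∏ i, ε i ≠ 0 := Finset.prod_ne_zero_iff.mpr fun i _ => by
    rcases hε i with h1 | h1 <;> simp [h1]
  have hconj_prod : g * P * h = (∏ i, ε i) • P' := by
    rw [← List.prod_ofFn_smul, ← funext hconj]
    exact (u.mul_list_prod_mul_inv _).trans (congrArg List.prod List.map_ofFn)
  calc Ideal.span {P * h} = Ideal.span {u • (P * h)} :=
        (Submodule.span_singleton_group_smul_eq _ u _).symm
    _ = Ideal.span {Units.mk0 _ hε0 • P'} := by
        rw [Units.smul_def, smul_eq_mul, ← mul_assoc]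
        exact congrArg _ (congrArg _ hconj_prod)
    _ = Ideal.span {P'} := Submodule.span_singleton_group_smul_eq _ _ _

/-- let `g` be a product of vectors of `q`-value 1 (with inverse `h`, the
product in reverse order).  If conjugation by `g` sends each basis vector `wᵢ` of `W` to
`±w'ᵢ` with `w'ᵢ ∈ V`, then the left ideals `Cl·(w₁⋯w_m)·g⁻¹` and `Cl·(w'₁⋯w'_m)` agree.
(`Ideal.span` over a noncommutative ring is the left ideal generated.) -/
theorem stmt6 {k V : Type*} [Field k] [AddCommGroup V] [Module k V]
    (Q : QuadraticForm k V) (h2 : (2 : k) ≠ 0)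
    (l : List V) (hl : ∀ u ∈ l, Q u = 1)
    (m : ℕ) (W : Submodule k V) (b : Module.Basis (Fin m) k W)
    (w' : Fin m → V) (ε : Fin m → k) (hε : ∀ i, ε i = 1 ∨ ε i = -1)
    (g h : CliffordAlgebra Q)
    (hg : g = (l.map (ι Q)).prod) (hh : h = (l.reverse.map (ι Q)).prod)
    (hconj : ∀ i, g * ι Q (b i : V) * h = ε i • ι Q (w' i)) :
    (g * h = 1 ∧ h * g = 1) ∧
      Ideal.span {((List.ofFn fun i => ι Q (b i : V)).prod) * h} =
        Ideal.span {(List.ofFn fun i => ι Q (w' i)).prod} :=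
  stmt6_general Q l hl m W b w' ε hε g h hg hh hconj
end

section
/- Suppose q is nondegenerate on V, so that K = ker(b) = 0. Let W be isotropic with basis w₁,…,w_m and I the left ideal generated by w₁⋯w_m. Then a vector v ∈ V satisfies I·v = 0 (i.e., right multiplication by v annihilates I) if and only if v ∈ W. -/
open CliffordAlgebra QuadraticMap

section aux

variable {k V : Type*} [Field k] [AddCommGroup V] [Module k V] (Q : QuadraticForm k V)

/-- Contracting past a list of vectors killed by `f` just picks up a sign. -/
lemma stmt10_auxK (f : Module.Dual k V) :
    ∀ (l : List V), (∀ a ∈ l, f a = 0) → ∀ x : CliffordAlgebra Q,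
      contractLeft (Q := Q) f ((l.map (ι Q)).prod * x)
        = ((-1 : k) ^ l.length) • ((l.map (ι Q)).prod * contractLeft (Q := Q) f x)
  | [], _, x => by simp
  | a :: t, h, x => by
    have ha : f a = 0 := h a ((List.mem_cons_self (a := a) (l := t)))
    have ht : ∀ b ∈ t, f b = 0 := fun b hb => h b (List.mem_cons_of_mem _ hb)
    simp only [List.map_cons, List.prod_cons, List.length_cons, mul_assoc]
    rw [contractLeft_ι_mul, ha, zero_smul, zero_sub, stmt10_auxK f t ht x,
      mul_smul_comm, pow_succ]
    rw [mul_neg_one, neg_smul]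

lemma stmt10_auxK2 (f : Module.Dual k V) (l : List V) (hl : ∀ a ∈ l, f a = 0)
    (v : V) (hv : f v = 0) :
    contractLeft (Q := Q) f ((l.map (ι Q)).prod * ι Q v) = 0 := by
  rw [stmt10_auxK Q f l hl, contractLeft_ι, hv, map_zero, mul_zero, smul_zero]

/-- The key nonvanishing statement, proved by stripping vectors off with contractions. -/
lemma stmt10_auxMain [Invertible (2 : k)] :
    ∀ (l : List V) (v : V),
      (∀ x ∈ v :: l, ∃ f : Module.Dual k V, f x = 1 ∧ ∀ y ∈ v :: l, y ≠ x → f y = 0) →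
      (v :: l).Nodup → (l.map (ι Q)).prod * ι Q v ≠ 0
  | [], v, hD, _, h0 => by
    obtain ⟨g, hg1, -⟩ := hD v (List.mem_cons_self)
    have := congrArg (contractLeft (Q := Q) g) (by simpa using h0)
    rw [contractLeft_ι, hg1, map_one, map_zero] at this
    exact one_ne_zero this
  | a :: t, v, hD, hnd, h0 => by
    have hvat : v ∉ a :: t := (List.nodup_cons.mp hnd).1
    have hat : (a :: t).Nodup := (List.nodup_cons.mp hnd).2
    have hva : v ≠ a := fun h => hvat (h ▸ (List.mem_cons_self (a := a) (l := t)))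
    have hant : a ∉ t := (List.nodup_cons.mp hat).1
    obtain ⟨f, hf1, hf0⟩ := hD a (List.mem_cons_of_mem _ ((List.mem_cons_self (a := a) (l := t))))
    have hfv : f v = 0 := hf0 v (List.mem_cons_self) hva
    have hft : ∀ y ∈ t, f y = 0 := fun y hy =>
      hf0 y (List.mem_cons_of_mem _ (List.mem_cons_of_mem _ hy))
        (fun h => hant (h ▸ hy))
    -- contract `h0` with `f`
    have h1 : (t.map (ι Q)).prod * ι Q v = 0 := by
      have := congrArg (contractLeft (Q := Q) f) h0
      rw [map_zero, List.map_cons, List.prod_cons, mul_assoc, contractLeft_ι_mul,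
        stmt10_auxK2 Q f t hft v hfv, mul_zero, sub_zero, hf1, one_smul] at this
      exact this
    refine stmt10_auxMain t v ?_ ?_ h1
    · intro x hx
      have hx' : x ∈ v :: a :: t := by
        rcases List.mem_cons.mp hx with h | h
        · exact h ▸ List.mem_cons_self
        · exact List.mem_cons_of_mem _ (List.mem_cons_of_mem _ h)
      obtain ⟨f', hf'1, hf'0⟩ := hD x hx'
      refine ⟨f', hf'1, fun y hy hyx => hf'0 y ?_ hyx⟩
      rcases List.mem_cons.mp hy with h | h
      · exact h ▸ List.mem_cons_self
      · exact List.mem_cons_of_mem _ (List.mem_cons_of_mem _ h)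
    · refine List.nodup_cons.mpr ⟨fun h => hvat (List.mem_cons_of_mem _ h),
        (List.nodup_cons.mp hat).2⟩

/-- Anticommutation of `ι w` past a list of vectors from an isotropic subspace. -/
lemma stmt10_auxC (W : Submodule k V) (hW : ∀ w ∈ W, Q w = 0) :
    ∀ (l : List V), (∀ a ∈ l, a ∈ W) → ∀ w : V, w ∈ W →
      (l.map (ι Q)).prod * ι Q w = ((-1 : k) ^ l.length) • (ι Q w * (l.map (ι Q)).prod)
  | [], _, w, _ => by simp
  | a :: t, h, w, hw => by
    have ha : a ∈ W := h a ((List.mem_cons_self (a := a) (l := t)))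
    have ht : ∀ b ∈ t, b ∈ W := fun b hb => h b (List.mem_cons_of_mem _ hb)
    have horth : Q.IsOrtho a w := by
      rw [QuadraticMap.isOrtho_def, hW _ ha, hW _ hw, hW _ (W.add_mem ha hw)]
      simp
    simp only [List.map_cons, List.prod_cons, List.length_cons, mul_assoc]
    rw [stmt10_auxC W hW t ht w hw, mul_smul_comm, ← mul_assoc,
      ι_mul_ι_comm_of_isOrtho horth, pow_succ, mul_neg_one, neg_smul, neg_mul,
      smul_neg, mul_assoc]

/-- The product over an isotropic list kills each of its members. -/
lemma stmt10_auxD (W : Submodule k V) (hW : ∀ w ∈ W, Q w = 0) :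
    ∀ (l : List V), (∀ a ∈ l, a ∈ W) → ∀ w ∈ l, (l.map (ι Q)).prod * ι Q w = 0
  | a :: t, h, w, hwl => by
    have ha : a ∈ W := h a ((List.mem_cons_self (a := a) (l := t)))
    have ht : ∀ b ∈ t, b ∈ W := fun b hb => h b (List.mem_cons_of_mem _ hb)
    simp only [List.map_cons, List.prod_cons, mul_assoc]
    rcases List.mem_cons.mp hwl with rfl | hwt
    · rw [stmt10_auxC Q W hW t ht w ha, mul_smul_comm, ← mul_assoc, ι_sq_scalar,
        hW _ ha, map_zero, zero_mul, smul_zero]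
    · rw [stmt10_auxD W hW t ht w hwt, mul_zero]

end aux

/-- if `q` is nondegenerate (the radical of the polar form is zero), `W`
isotropic with basis `w₁,…,w_m` and `I = Cl·(w₁⋯w_m)`, then a vector `v` satisfies
`I·v = 0` iff `v ∈ W`. -/
theorem stmt10 {k V : Type*} [Field k] [AddCommGroup V] [Module k V]
    (Q : QuadraticForm k V) (h2 : (2 : k) ≠ 0)
    (hnd : ∀ v : V, (∀ w : V, polar Q v w = 0) → v = 0)
    (W : Submodule k V) (hW : ∀ w ∈ W, Q w = 0)
    (m : ℕ) (b : Module.Basis (Fin m) k W) (v : V) :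
    (∀ x ∈ Ideal.span {(List.ofFn fun i => ι Q (b i : V)).prod}, x * ι Q v = 0) ↔
      v ∈ W := by
  haveI : Invertible (2 : k) := invertibleOfNonzero h2
  set wl : List V := List.ofFn (fun i => (b i : V)) with hwl
  have hprod : (List.ofFn fun i => ι Q (b i : V)).prod = (wl.map (ι Q)).prod := by
    rw [hwl, List.map_ofFn]; rfl
  have hmemW : ∀ a ∈ wl, a ∈ W := by
    intro a ha
    obtain ⟨i, rfl⟩ := List.mem_ofFn.mp ha
    exact (b i).2
  constructor
  · intro h
    by_contra hv
    have h0 : (wl.map (ι Q)).prod * ι Q v = 0 := by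
      rw [← hprod]
      exact h _ (Ideal.subset_span rfl)
    -- build the dual functionals
    have hvq : (Submodule.Quotient.mk v : V ⧸ W) ≠ 0 := by
      simpa [Submodule.Quotient.mk_eq_zero] using hv
    obtain ⟨φ, hφ⟩ : ∃ φ : Module.Dual k (V ⧸ W), φ (Submodule.Quotient.mk v) ≠ 0 := by
      by_contra hc
      push_neg at hc
      exact hvq ((Module.forall_dual_apply_eq_zero_iff k _).mp hc)
    set g : Module.Dual k V := (φ (Submodule.Quotient.mk v))⁻¹ • (φ ∘ₗ W.mkQ) with hg
    have hgv : g v = 1 := by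
      simp [hg, inv_mul_cancel₀ hφ]
    have hgW : ∀ w ∈ W, g w = 0 := by
      intro w hw
      simp [hg, (Submodule.Quotient.mk_eq_zero W).mpr hw]
    have hD : ∀ x ∈ v :: wl, ∃ f : Module.Dual k V, f x = 1 ∧
        ∀ y ∈ v :: wl, y ≠ x → f y = 0 := by
      intro x hx
      rcases List.mem_cons.mp hx with rfl | hxl
      · refine ⟨g, hgv, fun y hy hyx => ?_⟩
        rcases List.mem_cons.mp hy with rfl | hyl
        · exact absurd rfl hyx
        · exact hgW y (hmemW y hyl)
      · obtain ⟨i, rfl⟩ := List.mem_ofFn.mp hxl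
        obtain ⟨F, hF⟩ := LinearMap.exists_extend (b.coord i)
        have hFW : ∀ w : W, F (w : V) = b.coord i w := fun w =>
          LinearMap.congr_fun hF w
        refine ⟨F - F v • g, ?_, ?_⟩
        · have : F ((b i : W) : V) = b.coord i (b i) := hFW (b i)
          simp only [LinearMap.sub_apply, LinearMap.smul_apply, smul_eq_mul]
          rw [this, Module.Basis.coord_apply, Module.Basis.repr_self, Finsupp.single_eq_same,
            hgW _ (b i).2, mul_zero, sub_zero]
        · intro y hy hyx
          rcases List.mem_cons.mp hy with rfl | hyl
          · simp [hgv]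
          · obtain ⟨j, rfl⟩ := List.mem_ofFn.mp hyl
            have hji : j ≠ i := by
              rintro rfl; exact hyx rfl
            have : F ((b j : W) : V) = b.coord i (b j) := hFW (b j)
            simp only [LinearMap.sub_apply, LinearMap.smul_apply, smul_eq_mul]
            rw [this, Module.Basis.coord_apply, Module.Basis.repr_self,
              Finsupp.single_eq_of_ne' hji, hgW _ (b j).2, mul_zero, sub_zero]
    have hnodup : (v :: wl).Nodup := by
      refine List.nodup_cons.mpr ⟨fun hvl => hv (hmemW v hvl), ?_⟩
      rw [hwl, List.nodup_ofFn]
      exact Subtype.coe_injective.comp b.injective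
    exact stmt10_auxMain Q wl v hD hnodup h0
  · intro hv x hx
    obtain ⟨c, rfl⟩ := Submodule.mem_span_singleton.mp hx
    have hωv : (wl.map (ι Q)).prod * ι Q v = 0 := by
      have hrep : v = ∑ i, b.repr ⟨v, hv⟩ i • (b i : V) := by
        have := congrArg (W.subtype) (b.sum_repr ⟨v, hv⟩).symm
        simp only [map_sum, map_smul, Submodule.subtype_apply] at this
        exact this
      rw [hrep, map_sum, Finset.mul_sum]
      refine Finset.sum_eq_zero fun i _ => ?_
      rw [LinearMap.map_smul, mul_smul_comm,
        stmt10_auxD Q W hW wl hmemW (b i : V) (List.mem_ofFn.mpr ⟨i, rfl⟩),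
        smul_zero]
    rw [smul_eq_mul, mul_assoc, hprod, hωv, mul_zero]
end

section
/- Let W' ⊂ W be isotropic subspaces of (V,q) with W' of codimension 1 in W, and suppose there exists v ∈ V with b(v,w') = 0 for all w' ∈ W' and b(v,w) = 1/2 for some fixed w ∈ W \ W'. Let I = Cl·ω_W and I' = Cl·ω_{W'} be the left ideals generated by products of bases of W and W' respectively (with the basis of W extending that of W' by w). Then the map I[1] → I' given by right multiplication by v is a section of the map I' → I[1] given by right multiplication by w: for every ξ ∈ Cl, (ξ·w·ω_{W'})·v·w = ξ·w·ω_{W'}. -/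
/-!
Writing `ω' = w₁⋯wₘ`, the element `v·w` commutes with every `wᵢ`, since each `wᵢ` anticommutes
with both `v` and `w` (they are orthogonal to it, `W` being isotropic). Hence
`ξ·w·ω'·v·w = ξ·(w·v·w)·ω'`, and `w·v·w = 2b(w,v)·w - q(w)·v = w`.
-/

open CliffordAlgebra QuadraticMap

theorem QuadraticMap.isOrtho_of_mem_of_forall_eq_zero {R M N : Type*} [CommSemiring R]
    [AddCommMonoid M] [Module R M] [AddCommMonoid N] [Module R N] {Q : QuadraticMap R M N}
    {S : Submodule R M} (hS : ∀ x ∈ S, Q x = 0) {x y : M} (hx : x ∈ S) (hy : y ∈ S) :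
    Q.IsOrtho x y := by
  rw [isOrtho_def, hS _ (S.add_mem hx hy), hS x hx, hS y hy, add_zero]

namespace CliffordAlgebra

variable {R M : Type*} [CommRing R] [AddCommGroup M] [Module R M] {Q : QuadraticForm R M}

theorem commute_ι_ι_mul_ι_of_isOrtho {x a b : M} (ha : Q.IsOrtho x a) (hb : Q.IsOrtho x b) :
    Commute (ι Q x) (ι Q a * ι Q b) :=
  calc ι Q x * (ι Q a * ι Q b) = -(ι Q a * (ι Q x * ι Q b)) := ι_mul_ι_mul_of_isOrtho _ ha
    _ = ι Q a * ι Q b * ι Q x := by rw [ι_mul_ι_comm_of_isOrtho hb, mul_neg, neg_neg, mul_assoc]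

theorem commute_prod_ofFn_ι_ι_mul_ι_of_isOrtho {m : ℕ} {xs : Fin m → M} {a b : M}
    (ha : ∀ i, Q.IsOrtho (xs i) a) (hb : ∀ i, Q.IsOrtho (xs i) b) :
    Commute (List.ofFn fun i => ι Q (xs i)).prod (ι Q a * ι Q b) :=
  Commute.list_prod_left _ _ fun _ hy => by
    obtain ⟨i, rfl⟩ := List.mem_ofFn.mp hy
    exact commute_ι_ι_mul_ι_of_isOrtho (ha i) (hb i)

theorem ι_mul_ι_mul_ι_of_isotropic {a b : M} (ha : Q a = 0) (hab : polar Q a b = 1) :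
    ι Q a * ι Q b * ι Q a = ι Q a := by
  rw [ι_mul_ι_mul_ι, ha, hab, one_smul, zero_smul, sub_zero]

end CliffordAlgebra

theorem stmt11_general {k V : Type*} [Field k] [AddCommGroup V] [Module k V]
    (Q : QuadraticForm k V)
    (m : ℕ) (w : V) (ws : Fin m → V)
    (hiso : ∀ x ∈ Submodule.span k (Set.range (Fin.cons w ws : Fin (m + 1) → V)),
      Q x = 0)
    (v : V) (hv : ∀ i, polar Q v (ws i) = 0) (hvw : polar Q v w = 1) :
    ∀ ξ : CliffordAlgebra Q,
      ξ * ι Q w * (List.ofFn fun i => ι Q (ws i)).prod * ι Q v * ι Q w =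
        ξ * ι Q w * (List.ofFn fun i => ι Q (ws i)).prod := by
  intro ξ
  set W := Submodule.span k (Set.range (Fin.cons w ws : Fin (m + 1) → V))
  have hw_mem : w ∈ W := Submodule.subset_span ⟨0, rfl⟩
  have hws_mem : ∀ i, ws i ∈ W := fun i => Submodule.subset_span ⟨i.succ, rfl⟩
  have hcomm : Commute (List.ofFn fun i => ι Q (ws i)).prod (ι Q v * ι Q w) :=
    commute_prod_ofFn_ι_ι_mul_ι_of_isOrtho (fun i => (isOrtho_polarBilin.mp (hv i)).symm)
      fun i => isOrtho_of_mem_of_forall_eq_zero hiso (hws_mem i) hw_mem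
  calc ξ * ι Q w * (List.ofFn fun i => ι Q (ws i)).prod * ι Q v * ι Q w
      = ξ * (ι Q w * ((List.ofFn fun i => ι Q (ws i)).prod * (ι Q v * ι Q w))) := by
        simp only [mul_assoc]
    _ = ξ * (ι Q w * ι Q v * ι Q w) * (List.ofFn fun i => ι Q (ws i)).prod := by
        rw [hcomm.eq]; simp only [mul_assoc]
    _ = ξ * ι Q w * (List.ofFn fun i => ι Q (ws i)).prod := by
        rw [ι_mul_ι_mul_ι_of_isotropic (hiso w hw_mem) (polar_comm Q v w ▸ hvw)]

/-- `W'` has basis `w₁,…,w_m`, `W` has basis `w,w₁,…,w_m`, all isotropic;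
`v` is orthogonal to `W'` (`b(v,wᵢ) = 0`) and `b(v,w) = 1/2` (`polar Q v w = 1`).
With `ω_{W'} = w₁⋯w_m`, right multiplication by `v` is a section of right multiplication
by `w`: `(ξ·w·ω_{W'})·v·w = ξ·w·ω_{W'}` for all `ξ`. -/
theorem stmt11 {k V : Type*} [Field k] [AddCommGroup V] [Module k V]
    (Q : QuadraticForm k V) (h2 : (2 : k) ≠ 0)
    (m : ℕ) (w : V) (ws : Fin m → V)
    (hli : LinearIndependent k (Fin.cons w ws : Fin (m + 1) → V))
    (hiso : ∀ x ∈ Submodule.span k (Set.range (Fin.cons w ws : Fin (m + 1) → V)),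
      Q x = 0)
    (v : V) (hv : ∀ i, polar Q v (ws i) = 0) (hvw : polar Q v w = 1) :
    ∀ ξ : CliffordAlgebra Q,
      ξ * ι Q w * (List.ofFn fun i => ι Q (ws i)).prod * ι Q v * ι Q w =
        ξ * ι Q w * (List.ofFn fun i => ι Q (ws i)).prod :=
  stmt11_general Q m w ws hiso v hv hvw
end

section
/- Let V have basis v₁,…,v_n, n ≥ 2k, with quadratic form q = x₁x_{k+1} + ⋯ + x_k x_{2k} (so the radical K is spanned by v_{2k+1},…,v_n). Let W = span(v_{k+1},…,v_{2k+l}) for some 0 ≤ l ≤ n - 2k, and let I ⊆ Cl(V,q) be the left ideal generated by ω = v_{k+1}⋯v_{2k+l}. Then v₁⋯v_k · (v_j·ω) = 0 for every j with 1 ≤ j ≤ k, while v₁⋯v_k·ω ≠ 0. -/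
open CliffordAlgebra QuadraticMap


section aux
variable {R : Type*} {M : Type*} [CommRing R] [AddCommGroup M] [Module R M]
  {Q : QuadraticForm R M}

lemma contract_pass (d : Module.Dual R M) (ms : List M) (h : ∀ m ∈ ms, d m = 0)
    (x : CliffordAlgebra Q) :
    contractLeft (Q := Q) d ((ms.map (ι Q)).prod * x) =
      ((-1 : R) ^ ms.length) • ((ms.map (ι Q)).prod * contractLeft (Q := Q) d x) := by
  induction ms with
  | nil => simp
  | cons m ms ih =>
    have hm : d m = 0 := h m (List.mem_cons_self)
    simp only [List.map_cons, List.prod_cons, mul_assoc, List.length_cons]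
    rw [contractLeft_ι_mul, hm, zero_smul, zero_sub,
      ih (fun a ha => h a (List.mem_cons_of_mem _ ha)), mul_smul_comm, pow_succ]
    module

lemma contract_kill (d : Module.Dual R M) (ms : List M) (h : ∀ m ∈ ms, d m = 0) :
    contractLeft (Q := Q) d ((ms.map (ι Q)).prod) = 0 := by
  simpa using contract_pass (Q := Q) d ms h 1

lemma anticomm_pass (v : M) (ms : List M) (h : ∀ m ∈ ms, polar Q m v = 0) :
    (ms.map (ι Q)).prod * ι Q v =
      ((-1 : R) ^ ms.length) • (ι Q v * (ms.map (ι Q)).prod) := by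
  induction ms with
  | nil => simp
  | cons m ms ih =>
    have hm : polar Q m v = 0 := h m (List.mem_cons_self)
    have hswap : ι Q m * ι Q v = - (ι Q v * ι Q m) :=
      eq_neg_of_add_eq_zero_left (by rw [ι_mul_ι_add_swap, hm, map_zero])
    simp only [List.map_cons, List.prod_cons, List.length_cons, mul_assoc]
    rw [ih (fun a ha => h a (List.mem_cons_of_mem _ ha)), mul_smul_comm, ← mul_assoc, hswap,
      neg_mul, pow_succ, mul_comm ((-1:R)^ms.length), mul_smul, neg_one_smul, smul_neg, mul_assoc]

lemma prod_mul_self_mem (v : M) (hv : Q v = 0) (ms : List M)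
    (h : ∀ m ∈ ms, polar Q m v = 0) (hmem : v ∈ ms) :
    (ms.map (ι Q)).prod * ι Q v = 0 := by
  induction ms with
  | nil => simp at hmem
  | cons m ms ih =>
    simp only [List.map_cons, List.prod_cons, mul_assoc]
    rcases List.mem_cons.mp hmem with rfl | hmem'
    · rw [anticomm_pass (Q := Q) v ms (fun a ha => h a (List.mem_cons_of_mem _ ha)),
        mul_smul_comm, ← mul_assoc, ι_sq_scalar, hv, map_zero, zero_mul, smul_zero]
    · rw [ih (fun a ha => h a (List.mem_cons_of_mem _ ha)) hmem', mul_zero]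

end aux

section aux2
variable {F : Type*} [Field F] {n : ℕ}

lemma e_congr {a b : ℕ} (ha : a < n) (hb : b < n) (h : a = b) :
    (Pi.single (⟨a, ha⟩ : Fin n) (1 : F) : Fin n → F) = Pi.single ⟨b, hb⟩ 1 := by subst h; rfl

lemma prod_single_ne_zero (ids : List (Fin n)) (hnd : ids.Nodup) :
    ((ids.map fun t => ι (0 : QuadraticForm F (Fin n → F)) (Pi.single t (1 : F))).prod) ≠ 0 := by
  induction ids with
  | nil =>
    simpa using (one_ne_zero :
      (1 : ExteriorAlgebra F (Fin n → F)) ≠ 0)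
  | cons t rest ih =>
    intro h0
    have hnd' := List.nodup_cons.mp hnd
    set d : Module.Dual F (Fin n → F) := LinearMap.proj t with hd
    have hP : contractLeft (Q := (0 : QuadraticForm F (Fin n → F))) d
        ((rest.map fun s => ι (0 : QuadraticForm F (Fin n → F)) (Pi.single s (1 : F))).prod) = 0 := by
      have : (rest.map fun s => ι (0 : QuadraticForm F (Fin n → F)) (Pi.single s (1 : F)))
          = ((rest.map fun s => Pi.single s (1:F)).map (ι (0 : QuadraticForm F (Fin n → F)))) := by
        simp [List.map_map, Function.comp]
      rw [this]
      refine contract_kill d _ ?_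
      intro m hm
      simp only [List.mem_map] at hm
      obtain ⟨s, hs, rfl⟩ := hm
      have : t ≠ s := fun hts => hnd'.1 (hts ▸ hs)
      simp [hd, Pi.single_apply, this.symm]
    have := congrArg (contractLeft (Q := (0 : QuadraticForm F (Fin n → F))) d) h0
    rw [List.map_cons, List.prod_cons, contractLeft_ι_mul, hP, mul_zero, sub_zero,
      map_zero] at this
    have hdt : d (Pi.single t (1:F)) = 1 := by simp [hd]
    rw [hdt, one_smul] at this
    exact ih hnd'.2 this
end aux2

section defs2
variable (F : Type*) [Field F]

def projLE (n c : ℕ) : (Fin n → F) →ₗ[F] (Fin n → F) :=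
  LinearMap.pi fun t => if (t : ℕ) < c then 0 else LinearMap.proj t

lemma projLE_apply (n c : ℕ) (x : Fin n → F) (t : Fin n) :
    projLE F n c x t = if (t : ℕ) < c then 0 else x t := by
  rw [projLE, LinearMap.pi_apply]
  split_ifs with h <;> simp [h]

def phiMap (n c : ℕ) (h : 2 * c ≤ n) : (Fin n → F) →ₗ[F] Module.Dual F (Fin n → F) :=
  ∑ i : Fin c, LinearMap.smulRight (LinearMap.proj (⟨i, by omega⟩ : Fin n))
    ((LinearMap.proj (⟨c + i, by omega⟩ : Fin n) : (Fin n → F) →ₗ[F] F))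

lemma phiMap_apply (n c : ℕ) (h : 2 * c ≤ n) (x y : Fin n → F) :
    phiMap F n c h x y = ∑ i : Fin c, x ⟨i, by omega⟩ * y ⟨c + i, by omega⟩ := by
  simp [phiMap, LinearMap.sum_apply, smul_eq_mul]

lemma phiMap_single_lt (n c : ℕ) (h : 2 * c ≤ n) (j : Fin n) (hj : (j : ℕ) < c)
    (y : Fin n → F) :
    phiMap F n c h (Pi.single j 1) y = y ⟨c + j, by omega⟩ := by
  rw [phiMap_apply]
  rw [Finset.sum_eq_single (⟨j, hj⟩ : Fin c)]
  · simp
  · intro i _ hi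
    have : (⟨(i : ℕ), by omega⟩ : Fin n) ≠ j := by
      intro hh
      apply hi
      apply Fin.ext
      simpa using congrArg Fin.val hh
    rw [Pi.single_eq_of_ne this, zero_mul]
  · simp

lemma phiMap_single_ge (n c : ℕ) (h : 2 * c ≤ n) (j : Fin n) (hj : c ≤ (j : ℕ)) :
    phiMap F n c h (Pi.single j 1) = 0 := by
  refine LinearMap.ext fun y => ?_
  rw [phiMap_apply]
  refine Finset.sum_eq_zero fun i _ => ?_
  have : (⟨(i : ℕ), by omega⟩ : Fin n) ≠ j := by
    intro hh
    have := congrArg Fin.val hh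
    simp at this
    omega
  rw [Pi.single_eq_of_ne this, zero_mul]

lemma projLE_single_lt (n c : ℕ) (j : Fin n) (hj : (j : ℕ) < c) :
    projLE F n c (Pi.single j 1) = 0 := by
  funext t
  rw [projLE_apply]
  split_ifs with ht
  · rfl
  · have : t ≠ j := by
      intro hh; rw [hh] at ht; omega
    simp [Pi.single_eq_of_ne this]

lemma projLE_single_ge (n c : ℕ) (j : Fin n) (hj : c ≤ (j : ℕ)) :
    projLE F n c (Pi.single j 1) = Pi.single j 1 := by
  funext t
  rw [projLE_apply]
  split_ifs with ht
  · have : t ≠ j := by intro hh; rw [hh] at ht; omega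
    simp [Pi.single_eq_of_ne this]
  · rfl
end defs2

section defsF
variable (F : Type*) [Field F]

noncomputable def fEnd (n c : ℕ) (h : 2 * c ≤ n) :
    (Fin n → F) →ₗ[F] Module.End F (CliffordAlgebra (0 : QuadraticForm F (Fin n → F))) :=
  ((LinearMap.mul F (CliffordAlgebra (0 : QuadraticForm F (Fin n → F)))) ∘ₗ
      ((ι (0 : QuadraticForm F (Fin n → F))) ∘ₗ projLE F n c)) +
    ((contractLeft (Q := (0 : QuadraticForm F (Fin n → F)))) ∘ₗ phiMap F n c h)

lemma fEnd_apply (n c : ℕ) (h : 2 * c ≤ n) (x : Fin n → F)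
    (a : CliffordAlgebra (0 : QuadraticForm F (Fin n → F))) :
    fEnd F n c h x a = ι (0 : QuadraticForm F (Fin n → F)) (projLE F n c x) * a +
      contractLeft (Q := (0 : QuadraticForm F (Fin n → F))) (phiMap F n c h x) a := rfl

lemma fEnd_sq (n c : ℕ) (h : 2 * c ≤ n) (Q : QuadraticForm F (Fin n → F))
    (hQ : ∀ x : Fin n → F,
      Q x = ∑ i : Fin c, x ⟨i.val, by omega⟩ * x ⟨c + i.val, by omega⟩)
    (x : Fin n → F) :
    fEnd F n c h x * fEnd F n c h x =
      algebraMap F (Module.End F (CliffordAlgebra (0 : QuadraticForm F (Fin n → F)))) (Q x) := by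
  refine LinearMap.ext fun a => ?_
  have hphiP : phiMap F n c h x (projLE F n c x) = Q x := by
    rw [phiMap_apply, hQ]
    refine Finset.sum_congr rfl fun i _ => ?_
    rw [projLE_apply]
    simp
  rw [Module.End.mul_apply, Module.algebraMap_end_apply, fEnd_apply, fEnd_apply]
  rw [mul_add, map_add, contractLeft_ι_mul, ← mul_assoc, ι_sq_scalar]
  simp only [QuadraticMap.zero_apply, map_zero, zero_mul, zero_add]
  rw [contractLeft_contractLeft, add_zero, hphiP]
  abel
end defsF


def bvec (F : Type*) [Field F] (n k : ℕ) : Fin n → F :=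
  if h : k < n then Pi.single ⟨k, h⟩ 1 else 0

lemma bvec_eq (F : Type*) [Field F] (n k : ℕ) (h : k < n) :
    bvec F n k = Pi.single ⟨k, h⟩ 1 := dif_pos h


set_option maxHeartbeats 2000000 in
/-- on `V = Fⁿ` with the quadratic form `q = x₁x_{c+1} + ⋯ + x_c x_{2c}`
(radical spanned by the last `n - 2c` coordinates), let `ω = v_{c+1}⋯v_{2c+l}` (the
product of the standard basis vectors spanning the isotropic subspace `W`) and
`ξ = v₁⋯v_c`.  Then `ξ·(v_j·ω) = 0` for every `j ≤ c`, while `ξ·ω ≠ 0`. -/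
theorem stmt12 {F : Type*} [Field F] (h2 : (2 : F) ≠ 0)
    (n c l : ℕ) (hn : 2 * c + l ≤ n)
    (Q : QuadraticForm F (Fin n → F))
    (hQ : ∀ x : Fin n → F,
      Q x = ∑ i : Fin c, x ⟨i.val, by omega⟩ * x ⟨c + i.val, by omega⟩) :
    (∀ j : Fin c,
      (List.ofFn fun i : Fin c =>
          ι Q (Pi.single (⟨i.val, by omega⟩ : Fin n) (1 : F))).prod *
        (ι Q (Pi.single (⟨j.val, by omega⟩ : Fin n) (1 : F)) *
          (List.ofFn fun i : Fin (c + l) =>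
            ι Q (Pi.single (⟨c + i.val, by omega⟩ : Fin n) (1 : F))).prod) = 0) ∧
    (List.ofFn fun i : Fin c =>
        ι Q (Pi.single (⟨i.val, by omega⟩ : Fin n) (1 : F))).prod *
      (List.ofFn fun i : Fin (c + l) =>
        ι Q (Pi.single (⟨c + i.val, by omega⟩ : Fin n) (1 : F))).prod ≠ 0 := by
  have h2c : 2 * c ≤ n := by omega
  -- Q vanishes on vectors supported away from coordinates [c, 2c)
  have vanish : ∀ x : Fin n → F, (∀ t : Fin c, x ⟨c + t.val, by omega⟩ = 0) → Q x = 0 := by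
    intro x hx
    rw [hQ]
    exact Finset.sum_eq_zero fun i _ => by rw [hx i, mul_zero]
  have hQsingle : ∀ (j : Fin n), (j : ℕ) < c → Q (Pi.single j (1 : F)) = 0 := by
    intro j hj
    refine vanish _ fun t => ?_
    refine Pi.single_eq_of_ne ?_ _
    intro hh
    have := congrArg Fin.val hh
    simp at this
    omega
  have hpolar : ∀ (i j : Fin n), (i : ℕ) < c → (j : ℕ) < c →
      polar Q (Pi.single i (1 : F)) (Pi.single j (1 : F)) = 0 := by
    intro i j hi hj
    have h1 : Q (Pi.single i (1:F) + Pi.single j (1:F)) = 0 := by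
      refine vanish _ fun t => ?_
      have hi' : (⟨c + t.val, by omega⟩ : Fin n) ≠ i := by
        intro hh; have := congrArg Fin.val hh; simp at this; omega
      have hj' : (⟨c + t.val, by omega⟩ : Fin n) ≠ j := by
        intro hh; have := congrArg Fin.val hh; simp at this; omega
      simp [Pi.single_eq_of_ne hi', Pi.single_eq_of_ne hj']
    have : polar Q (Pi.single i (1:F)) (Pi.single j (1:F)) =
        Q (Pi.single i (1:F) + Pi.single j (1:F)) - Q (Pi.single i (1:F)) -
          Q (Pi.single j (1:F)) := rfl
    rw [this, h1, hQsingle i hi, hQsingle j hj]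
    ring
  constructor
  · -- part 1
    intro j
    have hj : (j : ℕ) < c := j.isLt
    have key1 : ((List.ofFn fun i : Fin c =>
        (Pi.single (⟨i.val, by omega⟩ : Fin n) (1 : F) : Fin n → F)).map (ι Q)).prod *
        ι Q (Pi.single (⟨j.val, by omega⟩ : Fin n) (1 : F)) = 0 := by
      refine prod_mul_self_mem _ (hQsingle _ (by simp)) _ ?_ ?_
      · intro m hm
        rw [List.mem_ofFn] at hm
        obtain ⟨i, rfl⟩ := hm
        exact hpolar _ _ (by simp) (by simp)
      · rw [List.mem_ofFn]
        exact ⟨⟨j.val, hj⟩, rfl⟩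
    rw [List.map_ofFn] at key1
    rw [← mul_assoc]
    have : (List.ofFn fun i : Fin c =>
        ι Q (Pi.single (⟨i.val, by omega⟩ : Fin n) (1 : F))).prod *
        ι Q (Pi.single (⟨j.val, by omega⟩ : Fin n) (1 : F)) = 0 := key1
    rw [this, zero_mul]
  · -- part 2
    obtain ⟨M₀, hM₀⟩ : ∃ M₀ : CliffordAlgebra Q →ₐ[F]
        Module.End F (CliffordAlgebra (0 : QuadraticForm F (Fin n → F))),
        M₀ = CliffordAlgebra.lift Q ⟨fEnd F n c h2c, fEnd_sq F n c h2c Q hQ⟩ := ⟨_, rfl⟩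
    have hM_lt : ∀ (j : Fin n), (j : ℕ) < c → ∀ b : CliffordAlgebra (0 : QuadraticForm F (Fin n → F)),
        M₀ (ι Q (Pi.single j (1:F))) b =
          contractLeft (Q := (0 : QuadraticForm F (Fin n → F)))
            (phiMap F n c h2c (Pi.single j (1:F))) b := by
      intro j hj b
      rw [hM₀, lift_ι_apply, fEnd_apply, projLE_single_lt F n c j hj, map_zero, zero_mul,
        zero_add]
    have hM_ge : ∀ (j : Fin n), c ≤ (j : ℕ) → ∀ b : CliffordAlgebra (0 : QuadraticForm F (Fin n → F)),
        M₀ (ι Q (Pi.single j (1:F))) b =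
          ι (0 : QuadraticForm F (Fin n → F)) (Pi.single j (1:F)) * b := by
      intro j hj b
      rw [hM₀, lift_ι_apply, fEnd_apply, phiMap_single_ge F n c h2c j hj, map_zero,
        LinearMap.zero_apply, add_zero, projLE_single_ge F n c j hj]
    have hcreate : ∀ (ms : List (Fin n → F)),
        (∀ m ∈ ms, ∀ b : CliffordAlgebra (0 : QuadraticForm F (Fin n → F)), M₀ (ι Q m) b = ι (0 : QuadraticForm F (Fin n → F)) m * b) →
        ∀ a : CliffordAlgebra (0 : QuadraticForm F (Fin n → F)), M₀ ((ms.map (ι Q)).prod) a =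
          (ms.map (ι (0 : QuadraticForm F (Fin n → F)))).prod * a := by
      intro ms
      induction ms with
      | nil => intro _ a; simp
      | cons m ms ih =>
        intro hm a
        simp only [List.map_cons, List.prod_cons, map_mul, Module.End.mul_apply]
        rw [ih (fun x hx => hm x (List.mem_cons_of_mem _ hx)) a,
          hm m (List.mem_cons_self), mul_assoc]
    intro h0
    -- basis values of phiMap
    have hphi_val : ∀ k k' : ℕ, k < c → k' < n →
        phiMap F n c h2c (bvec F n k) (bvec F n k') = if k' = c + k then 1 else 0 := by
      intro k k' hk hk'
      rw [bvec_eq F n k (by omega), bvec_eq F n k' hk',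
        phiMap_single_lt F n c h2c ⟨k, by omega⟩ hk]
      simp only [Pi.single_apply, Fin.ext_iff]
      by_cases h : k' = c + k
      · rw [if_pos (by simp [h]), if_pos h]
      · rw [if_neg (by simpa using fun hh => h hh.symm), if_neg h]
    have hM_lt' : ∀ k : ℕ, k < c → ∀ b : CliffordAlgebra (0 : QuadraticForm F (Fin n → F)),
        M₀ (ι Q (bvec F n k)) b =
          contractLeft (Q := (0 : QuadraticForm F (Fin n → F))) (phiMap F n c h2c (bvec F n k)) b := by
      intro k hk b
      rw [bvec_eq F n k (by omega)]
      exact hM_lt ⟨k, by omega⟩ hk b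
    have hM_ge' : ∀ k : ℕ, c ≤ k → k < n → ∀ b : CliffordAlgebra (0 : QuadraticForm F (Fin n → F)),
        M₀ (ι Q (bvec F n k)) b = ι (0 : QuadraticForm F (Fin n → F)) (bvec F n k) * b := by
      intro k hk hkn b
      rw [bvec_eq F n k hkn]
      exact hM_ge ⟨k, hkn⟩ hk b
    have hpass : ∀ k : ℕ, k < c → ∀ (r : ℕ) (g : Fin r → ℕ),
        (∀ i, g i ≠ c + k) → (∀ i, g i < n) → ∀ x : CliffordAlgebra (0 : QuadraticForm F (Fin n → F)),
        contractLeft (Q := (0 : QuadraticForm F (Fin n → F))) (phiMap F n c h2c (bvec F n k))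
            ((List.ofFn fun i => ι (0 : QuadraticForm F (Fin n → F)) (bvec F n (g i))).prod * x) =
          ((-1 : F) ^ r) • ((List.ofFn fun i => ι (0 : QuadraticForm F (Fin n → F)) (bvec F n (g i))).prod *
            contractLeft (Q := (0 : QuadraticForm F (Fin n → F))) (phiMap F n c h2c (bvec F n k)) x) := by
      intro k hk r g hg hgn x
      have hvan : ∀ m ∈ (List.ofFn fun i => bvec F n (g i)),
          phiMap F n c h2c (bvec F n k) m = 0 := by
        intro m hm
        rw [List.mem_ofFn] at hm
        obtain ⟨i, rfl⟩ := hm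
        rw [hphi_val k (g i) hk (hgn i), if_neg (hg i)]
      have H := contract_pass (Q := (0 : QuadraticForm F (Fin n → F))) (phiMap F n c h2c (bvec F n k))
        (List.ofFn fun i => bvec F n (g i)) hvan x
      rw [List.map_ofFn, List.length_ofFn] at H
      exact H
    have hkill : ∀ k : ℕ, k < c → ∀ (r : ℕ) (g : Fin r → ℕ),
        (∀ i, g i ≠ c + k) → (∀ i, g i < n) →
        contractLeft (Q := (0 : QuadraticForm F (Fin n → F))) (phiMap F n c h2c (bvec F n k))
            ((List.ofFn fun i => ι (0 : QuadraticForm F (Fin n → F)) (bvec F n (g i))).prod) = 0 := by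
      intro k hk r g hg hgn
      have H := hpass k hk r g hg hgn 1
      rw [mul_one, contractLeft_one, mul_zero, smul_zero] at H
      exact H
    -- the radical part of ω
    set w : CliffordAlgebra (0 : QuadraticForm F (Fin n → F)) := (List.ofFn fun i : Fin l =>
      ι (0 : QuadraticForm F (Fin n → F)) (bvec F n (c + (c + i.val)))).prod with hw
    have hwne : w ≠ 0 := by
      have hnd : (List.ofFn fun i : Fin l => (⟨c + (c + i.val), by omega⟩ : Fin n)).Nodup :=
        List.nodup_ofFn.mpr (by
          intro i j hij
          have := congrArg Fin.val hij
          simp at this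
          exact Fin.ext this)
      have H := prod_single_ne_zero (F := F)
        (List.ofFn fun i : Fin l => (⟨c + (c + i.val), by omega⟩ : Fin n)) hnd
      rw [List.map_ofFn] at H
      have hwform : w = (List.ofFn fun i : Fin l =>
          ι (0 : QuadraticForm F (Fin n → F)) (Pi.single ((⟨c + (c + i.val), by omega⟩ : Fin n)) (1 : F))).prod := by
        refine congrArg List.prod (congrArg List.ofFn (funext fun i => ?_))
        rw [bvec_eq F n (c + (c + i.val)) (by omega)]
      rw [hwform]
      exact H
    -- the key induction
    have key : ∀ m a : ℕ, a + m ≤ c → ∃ ε : F, ε ≠ 0 ∧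
        M₀ ((List.ofFn fun i : Fin m => ι Q (bvec F n (a + i.val))).prod)
          ((List.ofFn fun i : Fin (a + m) => ι (0 : QuadraticForm F (Fin n → F)) (bvec F n (c + i.val))).prod * w)
        = ε • ((List.ofFn fun i : Fin a => ι (0 : QuadraticForm F (Fin n → F)) (bvec F n (c + i.val))).prod * w) := by
      intro m
      induction m with
      | zero => intro a hac; exact ⟨1, one_ne_zero, by simp⟩
      | succ m ih =>
        intro a hac
        obtain ⟨ε, hε, hIH⟩ := ih a (by omega)
        refine ⟨(-1 : F) ^ (a + m) * ε,
          mul_ne_zero (pow_ne_zero _ (neg_ne_zero.mpr one_ne_zero)) hε, ?_⟩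
        have hsplitξ : (List.ofFn fun i : Fin (m + 1) => ι Q (bvec F n (a + i.val))).prod =
            (List.ofFn fun i : Fin m => ι Q (bvec F n (a + i.val))).prod *
              ι Q (bvec F n (a + m)) := by
          rw [List.ofFn_succ', List.prod_concat]
          rfl
        have hsplitS : (List.ofFn fun i : Fin (a + (m + 1)) =>
              ι (0 : QuadraticForm F (Fin n → F)) (bvec F n (c + i.val))).prod =
            (List.ofFn fun i : Fin (a + m) => ι (0 : QuadraticForm F (Fin n → F)) (bvec F n (c + i.val))).prod *
              ι (0 : QuadraticForm F (Fin n → F)) (bvec F n (c + (a + m))) := by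
          rw [show a + (m + 1) = (a + m) + 1 from rfl, List.ofFn_succ', List.prod_concat]
          rfl
        have hdw : contractLeft (Q := (0 : QuadraticForm F (Fin n → F))) (phiMap F n c h2c (bvec F n (a + m))) w = 0 := by
          rw [hw]
          exact hkill (a + m) (by omega) l (fun i => c + (c + i.val))
            (fun i => by beta_reduce; omega) (fun i => by beta_reduce; omega)
        have hcontr : contractLeft (Q := (0 : QuadraticForm F (Fin n → F))) (phiMap F n c h2c (bvec F n (a + m)))
              ((List.ofFn fun i : Fin (a + m) => ι (0 : QuadraticForm F (Fin n → F)) (bvec F n (c + i.val))).prod *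
                (ι (0 : QuadraticForm F (Fin n → F)) (bvec F n (c + (a + m))) * w)) =
            ((-1 : F) ^ (a + m)) •
              ((List.ofFn fun i : Fin (a + m) => ι (0 : QuadraticForm F (Fin n → F)) (bvec F n (c + i.val))).prod * w) := by
          rw [hpass (a + m) (by omega) (a + m) (fun i => c + i.val)
            (fun i => by beta_reduce; omega) (fun i => by beta_reduce; omega)]
          rw [contractLeft_ι_mul, hdw, mul_zero, sub_zero,
            hphi_val (a + m) (c + (a + m)) (by omega) (by omega), if_pos rfl, one_smul]
        rw [hsplitξ, map_mul M₀ _ _, Module.End.mul_apply, hsplitS, mul_assoc,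
          hM_lt' (a + m) (by omega), hcontr, LinearMap.map_smul, hIH, smul_smul]
    obtain ⟨ε, hε, hkey⟩ := key c 0 (by omega)
    rw [show (0 : ℕ) + c = c from Nat.zero_add c] at hkey
    have hzadd : (fun i : Fin c => ι Q (bvec F n (0 + i.val))) =
        fun i : Fin c => ι Q (bvec F n i.val) := by
      funext i; rw [Nat.zero_add]
    rw [hzadd] at hkey
    simp only [List.ofFn_zero, List.prod_nil, one_mul] at hkey
    -- conversions between statement form and bvec form
    have hξconv : (List.ofFn fun i : Fin c =>
        ι Q (Pi.single (⟨i.val, by omega⟩ : Fin n) (1 : F))).prod =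
        (List.ofFn fun i : Fin c => ι Q (bvec F n i.val)).prod := by
      refine congrArg List.prod (congrArg List.ofFn (funext fun i => ?_))
      rw [bvec_eq F n i.val (by omega)]
    have hωconv : (List.ofFn fun i : Fin (c + l) =>
        ι Q (Pi.single (⟨c + i.val, by omega⟩ : Fin n) (1 : F))).prod =
        (List.ofFn fun i : Fin (c + l) => ι Q (bvec F n (c + i.val))).prod := by
      refine congrArg List.prod (congrArg List.ofFn (funext fun i => ?_))
      rw [bvec_eq F n (c + i.val) (by omega)]
    have hω1 : M₀ ((List.ofFn fun i : Fin (c + l) => ι Q (bvec F n (c + i.val))).prod) 1 =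
        (List.ofFn fun i : Fin (c + l) => ι (0 : QuadraticForm F (Fin n → F)) (bvec F n (c + i.val))).prod := by
      have hmem : ∀ m ∈ (List.ofFn fun i : Fin (c + l) => bvec F n (c + i.val)),
          ∀ b : CliffordAlgebra (0 : QuadraticForm F (Fin n → F)), M₀ (ι Q m) b = ι (0 : QuadraticForm F (Fin n → F)) m * b := by
        intro m hm
        rw [List.mem_ofFn] at hm
        obtain ⟨i, rfl⟩ := hm
        exact hM_ge' (c + i.val) (by omega) (by omega)
      have H := hcreate (List.ofFn fun i : Fin (c + l) => bvec F n (c + i.val)) hmem 1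
      rw [List.map_ofFn, List.map_ofFn, mul_one] at H
      exact H
    have hsplitω : (List.ofFn fun i : Fin (c + l) => ι (0 : QuadraticForm F (Fin n → F)) (bvec F n (c + i.val))).prod =
        (List.ofFn fun i : Fin c => ι (0 : QuadraticForm F (Fin n → F)) (bvec F n (c + i.val))).prod * w := by
      rw [List.ofFn_add, List.prod_append]
      rfl
    have hM := congrArg (fun z => M₀ z (1 : CliffordAlgebra (0 : QuadraticForm F (Fin n → F)))) h0
    simp only [map_zero, LinearMap.zero_apply] at hM
    rw [hξconv, hωconv, map_mul M₀ _ _, Module.End.mul_apply, hω1, hsplitω, hkey] at hM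
    rcases smul_eq_zero.mp hM with h | h
    · exact hε h
    · exact hwne h
end

section
/- Suppose q is degenerate with radical K ≠ 0. Then the homomorphism from the group G (generated by unit vectors in Cl(V,q)) to O(V,q) by twisted conjugation is not surjective: every element in the image acts on K as ±identity, whereas O(V,q) contains elements acting on K by any invertible linear map (assuming dim K ≥ 1 and the field has an element λ ≠ ±1 with appropriate properties, e.g. k infinite). -/
/-!
If `x` lies in the radical of `Q`, then `ι x` anticommutes with every vector, so
`a * ι x = ι x * involute a` for all `a` in the Clifford algebra. For a product `g` of unit
vectors, `g * reverse g = 1`, so the twisted conjugation by `g` sends `x` to itself and hence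
the induced orthogonal map fixes the radical pointwise. On the other hand, scaling the radical
by any `λ ≠ 0` and fixing a complement is an isometry, since it moves each vector only by an
element of the radical. For `λ ≠ 1` this isometry is therefore not induced by any such `g`.
-/

open CliffordAlgebra QuadraticMap

theorem QuadraticMap.map_eq_of_sub_mem_radical {R M P : Type*} [CommRing R] [AddCommGroup M]
    [Module R M] [AddCommGroup P] [Module R P] {Q : QuadraticMap R M P} {x y : M}
    (h : x - y ∈ Q.radical) : Q x = Q y := by
  simpa using (mem_radical_iff'.1 h).2 y

theorem Submodule.exists_linearEquiv_smul_on_and_sub_mem {k V : Type*} [Field k] [AddCommGroup V]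
    [Module k V] (K : Submodule k V) {c : k} (hc : c ≠ 0) :
    ∃ f : V ≃ₗ[k] V, (∀ x ∈ K, f x = c • x) ∧ ∀ v, f v - v ∈ K := by
  obtain ⟨W, hW⟩ := K.exists_isCompl
  let e := K.prodEquivOfIsCompl W hW
  refine ⟨e.symm.trans (((LinearEquiv.smulOfNeZero k K c hc).prodCongr (.refl k W)).trans e),
    fun x hx => ?_, fun v => ?_⟩
  · simp [e, projection_apply_of_mem_left hW hx, projection_apply_of_mem_right hW.symm hx]
  · simp only [e, LinearEquiv.trans_apply, prodEquivOfIsCompl_symm_apply,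
      LinearEquiv.prodCongr_apply, LinearEquiv.smulOfNeZero_apply, LinearEquiv.refl_apply,
      coe_prodEquivOfIsCompl', SetLike.val_smul, coe_projectionOnto_apply,
      projection_eq_self_sub_projection hW]
    convert K.smul_mem (c - 1) (projection_apply_mem hW v) using 1
    module

namespace CliffordAlgebra

variable {R M : Type*} [CommRing R] [AddCommGroup M] [Module R M] {Q : QuadraticForm R M}

theorem mul_ι_of_mem_radical {x : M} (hx : x ∈ Q.radical) (a : CliffordAlgebra Q) :
    a * ι Q x = ι Q x * involute a := by
  induction a using CliffordAlgebra.induction with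
  | algebraMap r => simp [Algebra.commutes]
  | ι m =>
    have hmx : Q.IsOrtho m x := (isOrtho_polarBilin.1 (by rw [hx.2, LinearMap.zero_apply])).symm
    simp [ι_mul_ι_comm_of_isOrtho hmx]
  | mul a b ha hb => rw [mul_assoc, hb, ← mul_assoc, ha, map_mul, mul_assoc]
  | add a b ha hb => rw [add_mul, ha, hb, map_add, mul_add]

theorem prod_map_ι_mul_reverse (l : List M) :
    (l.map (ι Q)).prod * reverse (l.map (ι Q)).prod = algebraMap R _ (l.map Q).prod := by
  induction l with
  | nil => simp
  | cons u l ih =>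
    simp only [List.map_cons, List.prod_cons, reverse.map_mul, reverse_ι, map_mul]
    rw [mul_assoc, ← mul_assoc _ _ (ι Q u), ih, ← mul_assoc,
      ← Algebra.commutes, mul_assoc, ι_sq_scalar, Algebra.commutes]

theorem ι_injective [Invertible (2 : R)] : Function.Injective (ι Q) := fun a b h => by
  simpa [equivExterior, changeForm_ι] using congrArg (equivExterior Q) h

theorem prod_mul_ι_mul_reverse_of_mem_radical (l : List M) {x : M} (hx : x ∈ Q.radical) :
    (l.map (ι Q)).prod * ι Q x * reverse (l.map (ι Q)).prod =
      ((-1 : R) ^ l.length * (l.map Q).prod) • ι Q x := by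
  rw [mul_ι_of_mem_radical hx, involute_prod_map_ι, mul_assoc, smul_mul_assoc,
    prod_map_ι_mul_reverse, mul_smul_comm, ← Algebra.commutes, ← Algebra.smul_def, smul_smul]

theorem eq_of_prod_mul_ι_mul_prod_reverse_eq [Invertible (2 : R)] {l : List M}
    (hl : ∀ u ∈ l, Q u = 1) {x y : M} (hx : x ∈ Q.radical)
    (h : (l.map (ι Q)).prod * ι Q x * (l.reverse.map (ι Q)).prod = (-1 : R) ^ l.length • ι Q y) :
    y = x := by
  rw [List.map_reverse, ← reverse_prod_map_ι, prod_mul_ι_mul_reverse_of_mem_radical l hx,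
    List.prod_eq_one (by simpa using hl), mul_one] at h
  exact ι_injective (((isUnit_neg_one.pow _).smul_left_cancel).1 h).symm

end CliffordAlgebra

theorem stmt16_general {k V : Type*} [Field k] [AddCommGroup V] [Module k V]
    (Q : QuadraticForm k V) (h2 : (2 : k) ≠ 0)
    (lam : k) (hlam1 : lam ≠ 1) (hlam0 : lam ≠ 0)
    (K : Submodule k V)
    (hK : ∀ v : V, v ∈ K ↔ (Q v = 0 ∧ ∀ w : V, polar Q v w = 0))
    (hKne : K ≠ ⊥) :
    ∃ f : V ≃ₗ[k] V, (∀ v, Q (f v) = Q v) ∧ (∀ x ∈ K, f x = lam • x) ∧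
      ∀ l : List V, (∀ u ∈ l, Q u = 1) →
        ∀ ρg : V ≃ₗ[k] V,
          (∀ v, (l.map (ι Q)).prod * ι Q v * (l.reverse.map (ι Q)).prod =
            ((-1 : k) ^ l.length) • ι Q (ρg v)) →
          ρg ≠ f := by
  have := invertibleOfNonzero h2
  have hKrad : K ≤ Q.radical := fun v hv => ⟨((hK v).1 hv).1, LinearMap.ext ((hK v).1 hv).2⟩
  obtain ⟨x, hxK, hx0⟩ := Submodule.exists_mem_ne_zero_of_ne_bot hKne
  obtain ⟨f, hfK, hf⟩ := K.exists_linearEquiv_smul_on_and_sub_mem hlam0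
  refine ⟨f, fun v => map_eq_of_sub_mem_radical (hKrad (hf v)), hfK, ?_⟩
  rintro l hl ρg hρ rfl
  have hfix : ρg x = x := eq_of_prod_mul_ι_mul_prod_reverse_eq hl (hKrad hxK) (hρ x)
  rw [hfK x hxK] at hfix
  exact hlam1 (smul_left_injective k hx0 (hfix.trans (one_smul k x).symm))

/-- if `q` is degenerate with nonzero radical `K`, the homomorphism
`ρ : G → O(V,q)` (twisted conjugation by products of unit vectors) is not surjective:
every `ρ(g)` fixes `K` pointwise, while `O(V,q)` contains an element acting on `K` by a
scalar `λ ∉ {1,-1}`.  Concretely, there is an orthogonal `f` scaling `K` by `λ` which is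
not of the form `ρ(g)` for any product `g` of unit vectors. -/
theorem stmt16 {k V : Type*} [Field k] [AddCommGroup V] [Module k V]
    (Q : QuadraticForm k V) (h2 : (2 : k) ≠ 0)
    (lam : k) (hlam1 : lam ≠ 1) (hlam2 : lam ≠ -1) (hlam0 : lam ≠ 0)
    (K : Submodule k V)
    (hK : ∀ v : V, v ∈ K ↔ (Q v = 0 ∧ ∀ w : V, polar Q v w = 0))
    (hKne : K ≠ ⊥) :
    ∃ f : V ≃ₗ[k] V, (∀ v, Q (f v) = Q v) ∧ (∀ x ∈ K, f x = lam • x) ∧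
      ∀ l : List V, (∀ u ∈ l, Q u = 1) →
        ∀ ρg : V ≃ₗ[k] V,
          (∀ v, (l.map (ι Q)).prod * ι Q v * (l.reverse.map (ι Q)).prod =
            ((-1 : k) ^ l.length) • ι Q (ρg v)) →
          ρg ≠ f :=
  stmt16_general Q h2 lam hlam1 hlam0 K hK hKne
end
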